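/- Let K = 2 and let α > 2. Then the infimum of 2·D_α(p‖q)/‖p−q‖₁² over all pairs p ≠ q in relint(Δ²) equals 2^{1−max{α,3}}; that is, it equals 1/4 for 2 < α ≤ 3 and 2^{1−α} for α > 3. In particular, 2^{1−max{α,3}} is the largest constant C ≥ 0 such that D_α(p‖q) ≥ (C/2)·‖p−q‖₁² holds for all p, q ∈ relint(Δ²). -/

import Mathlib

open Finset Real

/-- The α-Tsallis entropy on the positive orthant (Shannon for α = 1, Burg for α = 0). -/
noncomputable def tsallis (α : ℝ) {K : ℕ} (p : Fin K → ℝ) : ℝ :=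
  if α = 0 then ∑ k, Real.log (p k)
  else if α = 1 then -∑ k, p k * Real.log (p k)
  else (∑ k, p k ^ α) / (α * (1 - α))

/-- The gradient of the α-Tsallis entropy on the positive orthant. -/
noncomputable def tsallisGrad (α : ℝ) {K : ℕ} (q : Fin K → ℝ) (k : Fin K) : ℝ :=
  if α = 0 then 1 / q k
  else if α = 1 then -(1 + Real.log (q k))
  else -(q k ^ (α - 1)) / (α - 1)

/-- The Bregman divergence D_α of the negative α-Tsallis entropy:
`D_α(p‖q) = -S_α(p) + S_α(q) + ⟨∇S_α(q), p - q⟩`. -/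
noncomputable def breg (α : ℝ) {K : ℕ} (p q : Fin K → ℝ) : ℝ :=
  -tsallis α p + tsallis α q + ∑ k, tsallisGrad α q k * (p k - q k)

/-- The relative interior of the probability simplex Δ^K. -/
def relintSimplex (K : ℕ) : Set (Fin K → ℝ) :=
  {p | (∀ k, 0 < p k ∧ p k < 1) ∧ ∑ k, p k = 1}

/-- The ℓ¹ norm on ℝ^K. -/
noncomputable def l1 {K : ℕ} (x : Fin K → ℝ) : ℝ := ∑ k, |x k|

/-!
For binary distributions `p = (x, 1 - x)`, `q = (y, 1 - y)` the divergence `D_α(p‖q)` is the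
one-dimensional Bregman divergence of `φ(t) = (t ^ α + (1 - t) ^ α) / (α (α - 1))`, and
`‖p - q‖₁ = 2 |x - y|`. Taylor's theorem with Lagrange remainder gives
`D_α(p‖q) = φ''(η) / 2 * (x - y) ^ 2` for some `η` between `x` and `y`, and the quotient tends to
`φ''(y) / 2` as `x → y`; so the ratios have infimum `inf φ'' / 4` over `(0, 1)`. For `α > 2`,
`φ''(t) = t ^ (α - 2) + (1 - t) ^ (α - 2)` has infimum `1` (approached as `t → 0`) when `α ≤ 3`,
and minimum `2 ^ (3 - α)` (at `t = 1 / 2`, by convexity of `u ↦ u ^ (α - 2)`) when `α > 3`.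
-/

open Set Filter Topology

noncomputable def bregmanDiv (f f' : ℝ → ℝ) (x y : ℝ) : ℝ := f x - f y - f' y * (x - y)

theorem exists_mem_uIoo_sub_eq_mul_sub {f f' : ℝ → ℝ} {a b : ℝ} (hab : a ≠ b)
    (hf : ∀ t ∈ uIcc a b, HasDerivAt f (f' t) t) :
    ∃ c ∈ uIoo a b, f a - f b = f' c * (a - b) := by
  obtain ⟨c, hc, h⟩ := exists_ratio_hasDerivAt_eq_ratio_slope f f' (min_lt_max.2 hab)
    (fun t ht => (hf t ht).continuousAt.continuousWithinAt)
    (fun t ht => hf t (Ioo_subset_Icc_self ht)) id 1 continuousOn_id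
    (fun t _ => hasDerivAt_id t)
  refine ⟨c, hc, ?_⟩
  rcases le_total a b with h' | h' <;>
    simp only [h', sup_of_le_left, sup_of_le_right, inf_of_le_left, inf_of_le_right, id_eq,
      Pi.one_apply, mul_one] at h <;>
    linarith

/-- Taylor's theorem with Lagrange remainder, via Cauchy's mean value theorem applied to
`t ↦ bregmanDiv f f' t y` and `t ↦ (t - y) ^ 2`. -/
theorem exists_mem_uIoo_bregmanDiv_eq {f f' f'' : ℝ → ℝ} {x y : ℝ} (hxy : x ≠ y)
    (hf : ∀ t ∈ uIcc x y, HasDerivAt f (f' t) t)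
    (hf' : ∀ t ∈ uIcc x y, HasDerivAt f' (f'' t) t) :
    ∃ η ∈ uIoo x y, bregmanDiv f f' x y = f'' η / 2 * (x - y) ^ 2 := by
  have hG : ∀ t ∈ uIcc x y, HasDerivAt (fun t => bregmanDiv f f' t y) (f' t - f' y) t := by
    intro t ht
    simpa only [bregmanDiv, mul_one] using
      ((hf t ht).sub_const (f y)).fun_sub (((hasDerivAt_id' t).sub_const y).const_mul (f' y))
  obtain ⟨c, hc, hcauchy⟩ := exists_ratio_hasDerivAt_eq_ratio_slope
    (fun t => bregmanDiv f f' t y) (fun t => f' t - f' y) (min_lt_max.2 hxy)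
    (fun t ht => (hG t ht).continuousAt.continuousWithinAt)
    (fun t ht => hG t (Ioo_subset_Icc_self ht)) (fun t => (t - y) ^ 2) (fun t => 2 * (t - y))
    (by fun_prop) (fun t _ => by simpa using ((hasDerivAt_id t).sub_const y).fun_pow 2)
  have hcauchy' : (x - y) ^ 2 * (f' c - f' y) = bregmanDiv f f' x y * (2 * (c - y)) := by
    rcases le_total x y with h | h <;>
      simp only [h, sup_of_le_left, sup_of_le_right, inf_of_le_left, inf_of_le_right, bregmanDiv,
        sub_self, ne_eq, OfNat.ofNat_ne_zero, not_false_eq_true, zero_pow, mul_zero]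
        at hcauchy ⊢ <;>
      linarith
  have hcy : c ≠ y := by grind [uIoo]
  have hsub : uIoo c y ⊆ uIoo x y := by grind [uIoo]
  obtain ⟨η, hη, hmvt⟩ := exists_mem_uIoo_sub_eq_mul_sub hcy
    (fun t ht => hf' t (uIcc_subset_uIcc (uIoo_subset_uIcc_self hc) right_mem_uIcc ht))
  refine ⟨η, hsub hη, ?_⟩
  rw [hmvt] at hcauchy'
  apply mul_right_cancel₀ (mul_ne_zero two_ne_zero (sub_ne_zero.2 hcy))
  linear_combination -hcauchy'

theorem tendsto_bregmanDiv_div_sq {f f' f'' : ℝ → ℝ} {y : ℝ}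
    (hf : ∀ᶠ t in 𝓝 y, HasDerivAt f (f' t) t) (hf' : ∀ᶠ t in 𝓝 y, HasDerivAt f' (f'' t) t)
    (hc : ContinuousAt f'' y) :
    Tendsto (fun x => bregmanDiv f f' x y / (x - y) ^ 2) (𝓝[≠] y) (𝓝 (f'' y / 2)) := by
  rw [Metric.tendsto_nhdsWithin_nhds]
  intro ε hε
  obtain ⟨δ₁, hδ₁, hderiv⟩ := Metric.eventually_nhds_iff.1 (hf.and hf')
  obtain ⟨δ₂, hδ₂, hcont⟩ := Metric.continuousAt_iff.1 hc ε hε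
  refine ⟨min δ₁ δ₂, lt_min hδ₁ hδ₂, fun x hxy hdist => ?_⟩
  have hclose : ∀ t ∈ uIcc x y, dist t y < min δ₁ δ₂ := fun t ht =>
    (abs_sub_left_of_mem_uIcc (uIcc_comm x y ▸ ht)).trans_lt hdist
  obtain ⟨η, hη, heq⟩ := exists_mem_uIoo_bregmanDiv_eq hxy
    (fun t ht => (hderiv ((hclose t ht).trans_le (min_le_left _ _))).1)
    (fun t ht => (hderiv ((hclose t ht).trans_le (min_le_left _ _))).2)
  rw [heq, mul_div_cancel_right₀ _ (pow_ne_zero 2 (sub_ne_zero.2 hxy)), Real.dist_eq,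
    ← sub_div, abs_div, abs_two]
  have := hcont ((hclose η (uIoo_subset_uIcc_self hη)).trans_le (min_le_right _ _))
  rw [Real.dist_eq] at this
  linarith

def bregmanQuotients (f f' : ℝ → ℝ) (s : Set ℝ) : Set ℝ :=
  {r | ∃ x ∈ s, ∃ y ∈ s, x ≠ y ∧ r = bregmanDiv f f' x y / (x - y) ^ 2}

theorem isGLB_bregmanQuotients {f f' f'' : ℝ → ℝ} {s : Set ℝ} {m : ℝ} (hs : IsOpen s)
    (hs' : s.OrdConnected) (hf : ∀ t ∈ s, HasDerivAt f (f' t) t)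
    (hf' : ∀ t ∈ s, HasDerivAt f' (f'' t) t) (hc : ContinuousOn f'' s)
    (hm : IsGLB (f'' '' s) m) :
    IsGLB (bregmanQuotients f f' s) (m / 2) := by
  constructor
  · rintro r ⟨x, hx, y, hy, hxy, rfl⟩
    obtain ⟨η, hη, heq⟩ := exists_mem_uIoo_bregmanDiv_eq hxy
      (fun t ht => hf t (hs'.uIcc_subset hx hy ht)) (fun t ht => hf' t (hs'.uIcc_subset hx hy ht))
    rw [heq, mul_div_cancel_right₀ _ (pow_ne_zero 2 (sub_ne_zero.2 hxy))]
    have := hm.1 (mem_image_of_mem f'' (hs'.uIcc_subset hx hy (uIoo_subset_uIcc_self hη)))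
    linarith
  · intro b hb
    suffices 2 * b ∈ lowerBounds (f'' '' s) by linarith [hm.2 this]
    rintro _ ⟨y, hy, rfl⟩
    have hlim := tendsto_bregmanDiv_div_sq (eventually_nhds_iff.2 ⟨s, hf, hs, hy⟩)
      (eventually_nhds_iff.2 ⟨s, hf', hs, hy⟩) (hc.continuousAt (hs.mem_nhds hy))
    have : b ≤ f'' y / 2 := ge_of_tendsto hlim <| by
      filter_upwards [eventually_nhdsWithin_of_eventually_nhds (hs.eventually_mem hy),
        self_mem_nhdsWithin] with x hx hxy
      exact hb ⟨x, hx, y, hy, hxy, rfl⟩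
    linarith

noncomputable def negTsallisBin (α t : ℝ) : ℝ := (t ^ α + (1 - t) ^ α) / (α * (α - 1))

noncomputable def negTsallisBin' (α t : ℝ) : ℝ := (t ^ (α - 1) - (1 - t) ^ (α - 1)) / (α - 1)

noncomputable def negTsallisBin'' (α t : ℝ) : ℝ := t ^ (α - 2) + (1 - t) ^ (α - 2)

section negTsallisBin

variable {α t : ℝ}

theorem hasDerivAt_negTsallisBin (hα : α ≠ 0) (ht : t ∈ Ioo (0 : ℝ) 1) :
    HasDerivAt (negTsallisBin α) (negTsallisBin' α t) t := by
  have h₁ := (hasDerivAt_id' t).rpow_const (p := α) (Or.inl ht.1.ne')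
  have h₂ := ((hasDerivAt_id' t).const_sub 1).rpow_const (p := α) (Or.inl (sub_pos.2 ht.2).ne')
  refine ((h₁.fun_add h₂).div_const (α * (α - 1))).congr_deriv ?_
  rcases eq_or_ne α 1 with rfl | hα₁
  · simp [negTsallisBin']
  · rw [negTsallisBin']
    field_simp
    ring

theorem hasDerivAt_negTsallisBin' (hα : α ≠ 1) (ht : t ∈ Ioo (0 : ℝ) 1) :
    HasDerivAt (negTsallisBin' α) (negTsallisBin'' α t) t := by
  have h₁ := (hasDerivAt_id' t).rpow_const (p := α - 1) (Or.inl ht.1.ne')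
  have h₂ := ((hasDerivAt_id' t).const_sub 1).rpow_const (p := α - 1)
    (Or.inl (sub_pos.2 ht.2).ne')
  refine ((h₁.fun_sub h₂).div_const (α - 1)).congr_deriv ?_
  rw [negTsallisBin'', show α - 1 - 1 = α - 2 by ring]
  field_simp [sub_ne_zero.2 hα]
  ring

theorem continuous_negTsallisBin'' (hα : 2 ≤ α) : Continuous (negTsallisBin'' α) :=
  have h := Real.continuous_rpow_const (sub_nonneg.2 hα)
  h.add (h.comp (continuous_const.sub continuous_id))

theorem negTsallisBin''_zero (hα : α ≠ 2) : negTsallisBin'' α 0 = 1 := by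
  simp [negTsallisBin'', Real.zero_rpow (sub_ne_zero.2 hα)]

theorem negTsallisBin''_half : negTsallisBin'' α (1 / 2) = 2 ^ (3 - α) := by
  rw [negTsallisBin'', show (1 : ℝ) - 1 / 2 = 1 / 2 by norm_num, ← two_mul,
    Real.div_rpow zero_le_one zero_le_two, Real.one_rpow, show (3 : ℝ) - α = 1 - (α - 2) by ring,
    Real.rpow_sub two_pos 1, Real.rpow_one]
  ring

theorem two_rpow_three_sub_max_le_negTsallisBin'' (ht : t ∈ Ioo (0 : ℝ) 1) :
    (2 : ℝ) ^ (3 - max α 3) ≤ negTsallisBin'' α t := by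
  have ht' : 1 - t ∈ Ioo (0 : ℝ) 1 := ⟨sub_pos.2 ht.2, sub_lt_self 1 ht.1⟩
  rcases le_or_gt α 3 with hα₃ | hα₃
  · have h (u : ℝ) (hu : u ∈ Ioo (0 : ℝ) 1) : u ≤ u ^ (α - 2) := by
      simpa using Real.rpow_le_rpow_of_exponent_ge hu.1 hu.2.le (by linarith : α - 2 ≤ 1)
    rw [max_eq_right hα₃, sub_self, Real.rpow_zero, negTsallisBin'']
    linarith [h t ht, h (1 - t) ht']
  · have hconv := (convexOn_rpow (by linarith : 1 ≤ α - 2)).2 (mem_Ici.2 ht.1.le)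
      (mem_Ici.2 ht'.1.le) one_half_pos.le one_half_pos.le (add_halves 1)
    rw [smul_eq_mul, smul_eq_mul, smul_eq_mul, smul_eq_mul, ← mul_add, add_sub_cancel,
      mul_one] at hconv
    have hhalf := negTsallisBin''_half (α := α)
    rw [negTsallisBin'', sub_self_div_two] at hhalf
    rw [max_eq_left hα₃.le, negTsallisBin'']
    linarith

theorem isGLB_negTsallisBin'' (hα : 2 < α) :
    IsGLB (negTsallisBin'' α '' Ioo 0 1) (2 ^ (3 - max α 3)) := by
  obtain ⟨t₀, ht₀, hval⟩ : ∃ t₀ ∈ Icc (0 : ℝ) 1, negTsallisBin'' α t₀ = 2 ^ (3 - max α 3) := by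
    rcases le_or_gt α 3 with hα₃ | hα₃
    · refine ⟨0, left_mem_Icc.2 zero_le_one, ?_⟩
      rw [negTsallisBin''_zero hα.ne', max_eq_right hα₃, sub_self, Real.rpow_zero]
    · exact ⟨1 / 2, ⟨by norm_num, by norm_num⟩, by rw [negTsallisBin''_half, max_eq_left hα₃.le]⟩
  refine isGLB_of_mem_closure
    (fun _ ⟨t, ht, h⟩ => h ▸ two_rpow_three_sub_max_le_negTsallisBin'' ht) ?_
  rw [← hval]
  exact (continuous_negTsallisBin'' hα.le).continuousWithinAt.mem_closure_image
    (by rwa [closure_Ioo zero_ne_one])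

end negTsallisBin

theorem relintSimplex_two_eq_image :
    relintSimplex 2 = (fun x => ![x, 1 - x]) '' Ioo 0 1 := by
  ext p
  constructor
  · rintro ⟨hp, hsum⟩
    rw [Fin.sum_univ_two] at hsum
    refine ⟨p 0, hp 0, ?_⟩
    ext k
    fin_cases k
    · rfl
    · simp only [Fin.isValue, Fin.mk_one, Matrix.cons_val_one, Matrix.cons_val_fin_one]
      linarith
  · rintro ⟨x, hx, rfl⟩
    refine ⟨fun k => ?_, by simp [Fin.sum_univ_two]⟩
    fin_cases k
    · exact hx
    · exact ⟨sub_pos.2 hx.2, sub_lt_self 1 hx.1⟩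

theorem breg_binary {α : ℝ} (hα₀ : α ≠ 0) (hα₁ : α ≠ 1) (x y : ℝ) :
    breg α ![x, 1 - x] ![y, 1 - y] = bregmanDiv (negTsallisBin α) (negTsallisBin' α) x y := by
  simp only [breg, tsallis, tsallisGrad, bregmanDiv, negTsallisBin, negTsallisBin', hα₀, hα₁,
    if_false, Fin.sum_univ_two, Fin.isValue, Matrix.cons_val_zero, Matrix.cons_val_one,
    Matrix.cons_val_fin_one, sub_sub_sub_cancel_left]
  have : α - 1 ≠ 0 := sub_ne_zero.2 hα₁
  have : 1 - α ≠ 0 := sub_ne_zero.2 hα₁.symm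
  field_simp
  ring

theorem l1_binary (x y : ℝ) : l1 (![x, 1 - x] - ![y, 1 - y]) = 2 * |x - y| := by
  simp only [l1, Pi.sub_apply, Fin.sum_univ_two, Fin.isValue, Matrix.cons_val_zero,
    Matrix.cons_val_one, Matrix.cons_val_fin_one, sub_sub_sub_cancel_left, abs_sub_comm]
  ring

theorem breg_self {α : ℝ} {K : ℕ} (p : Fin K → ℝ) : breg α p p = 0 := by
  simp [breg]

theorem l1_pos {K : ℕ} {x : Fin K → ℝ} (hx : x ≠ 0) : 0 < l1 x := by
  obtain ⟨k, hk⟩ := Function.ne_iff.1 hx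
  exact Finset.sum_pos' (fun i _ => abs_nonneg (x i)) ⟨k, Finset.mem_univ k, abs_pos.2 hk⟩

def pinskerRatios (α : ℝ) (K : ℕ) : Set ℝ :=
  {r | ∃ p ∈ relintSimplex K, ∃ q ∈ relintSimplex K, p ≠ q ∧ r = 2 * breg α p q / l1 (p - q) ^ 2}

theorem forall_breg_ge_iff_mem_lowerBounds {α C : ℝ} {K : ℕ} :
    (∀ p ∈ relintSimplex K, ∀ q ∈ relintSimplex K, breg α p q ≥ C / 2 * l1 (p - q) ^ 2) ↔
      C ∈ lowerBounds (pinskerRatios α K) := by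
  constructor
  · rintro h r ⟨p, hp, q, hq, hpq, rfl⟩
    have := l1_pos (sub_ne_zero.2 hpq)
    rw [le_div_iff₀ (by positivity)]
    linarith [h p hp q hq]
  · intro h p hp q hq
    rcases eq_or_ne p q with rfl | hpq
    · simp [breg_self, l1]
    · have := l1_pos (sub_ne_zero.2 hpq)
      have := h ⟨p, hp, q, hq, hpq, rfl⟩
      rw [le_div_iff₀ (by positivity)] at this
      linarith

theorem pinskerRatios_two_eq {α : ℝ} (hα₀ : α ≠ 0) (hα₁ : α ≠ 1) :
    pinskerRatios α 2 =
      (fun r => 2⁻¹ * r) '' bregmanQuotients (negTsallisBin α) (negTsallisBin' α) (Ioo 0 1) := by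
  have hinj : Function.Injective fun x : ℝ => ![x, 1 - x] := fun x y h => congrFun h 0
  ext r
  simp only [pinskerRatios, relintSimplex_two_eq_image, exists_mem_image, hinj.ne_iff,
    breg_binary hα₀ hα₁, l1_binary]
  have hratio (x y : ℝ) (B : ℝ) : 2 * B / (2 * |x - y|) ^ 2 = 2⁻¹ * (B / (x - y) ^ 2) := by
    rw [mul_pow, sq_abs]
    generalize (x - y) ^ 2 = d
    ring
  constructor
  · rintro ⟨x, hx, y, hy, hxy, rfl⟩
    exact ⟨_, ⟨x, hx, y, hy, hxy, rfl⟩, (hratio x y _).symm⟩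
  · rintro ⟨_, ⟨x, hx, y, hy, hxy, rfl⟩, rfl⟩
    exact ⟨x, hx, y, hy, hxy, (hratio x y _).symm⟩

theorem isGLB_pinskerRatios_two {α : ℝ} (hα : 2 < α) :
    IsGLB (pinskerRatios α 2) (2 ^ (1 - max α 3)) := by
  have hα₀ : α ≠ 0 := by linarith
  have hα₁ : α ≠ 1 := by linarith
  rw [pinskerRatios_two_eq hα₀ hα₁, show (2 : ℝ) ^ (1 - max α 3) = 2⁻¹ * (2 ^ (3 - max α 3) / 2) by
    rw [show (3 : ℝ) - max α 3 = 2 + (1 - max α 3) by ring, Real.rpow_add two_pos]; norm_num; ring]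
  exact (isGLB_bregmanQuotients isOpen_Ioo ordConnected_Ioo
    (fun t ht => hasDerivAt_negTsallisBin hα₀ ht) (fun t ht => hasDerivAt_negTsallisBin' hα₁ ht)
    (continuous_negTsallisBin'' hα.le).continuousOn (isGLB_negTsallisBin'' hα)).mul_left
    (by norm_num)

theorem pinsker_tsallis_binary_alpha_gt_two (α : ℝ) (hα : 2 < α) :
    sInf {r : ℝ | ∃ p ∈ relintSimplex 2, ∃ q ∈ relintSimplex 2,
        p ≠ q ∧ r = 2 * breg α p q / (l1 (p - q)) ^ 2} = (2 : ℝ) ^ (1 - max α 3) ∧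
    (α ≤ 3 → (2 : ℝ) ^ (1 - max α 3) = 1 / 4) ∧
    (3 < α → (2 : ℝ) ^ (1 - max α 3) = (2 : ℝ) ^ (1 - α)) ∧
    IsGreatest {C : ℝ | 0 ≤ C ∧ ∀ p ∈ relintSimplex 2, ∀ q ∈ relintSimplex 2,
        breg α p q ≥ C / 2 * (l1 (p - q)) ^ 2} ((2 : ℝ) ^ (1 - max α 3)) := by
  have hglb := isGLB_pinskerRatios_two hα
  refine ⟨hglb.csInf_eq hglb.nonempty, fun hα₃ => ?_, fun hα₃ => by rw [max_eq_left hα₃.le],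
    ⟨by positivity, forall_breg_ge_iff_mem_lowerBounds.2 hglb.1⟩,
    fun C hC => hglb.2 (forall_breg_ge_iff_mem_lowerBounds.1 hC.2)⟩
  rw [max_eq_right hα₃]
  norm_num
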